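/- Let n ≥ 1, let R be an n×n real upper triangular matrix with positive diagonal entries r_11,…,r_nn, let σ > 0, and let B = {x ∈ ℤⁿ : ℓ ≤ x ≤ u} with ℓ, u ∈ ℤⁿ and ℓ_i < u_i for all i. Let x̂ be uniformly distributed over B and let ṽ ~ N(0, σ²Iₙ) be independent of x̂. Let x^BR be the box-constrained rounding detector computed from d = x̂ + R⁻¹ṽ (x_i^BR = ℓ_i if ⌊d_i⌉ ≤ ℓ_i, x_i^BR = ⌊d_i⌉ if ℓ_i < ⌊d_i⌉ < u_i, x_i^BR = u_i if ⌊d_i⌉ ≥ u_i), and let x^BB be the box-constrained Babai detector computed from ỹ = R x̂ + ṽ by the recursion c_i = (ỹ_i − ∑_{j=i+1}^n r_ij x_j^BB)/r_ii, x_i^BB = ℓ_i if ⌊c_i⌉ ≤ ℓ_i, x_i^BB = ⌊c_i⌉ if ℓ_i < ⌊c_i⌉ < u_i, x_i^BB = u_i if ⌊c_i⌉ ≥ u_i, for i = n,…,1. Then Pr(x^BR = x̂) ≤ Pr(x^BB = x̂). -/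

import Mathlib

open MeasureTheory ProbabilityTheory Matrix
open scoped ENNReal NNReal

/-- Nearest integer rounding, with ties broken toward the integer of smaller magnitude. -/
noncomputable def nround (x : ℝ) : ℤ :=
  if 0 ≤ x then ⌈x - 1 / 2⌉ else ⌊x + 1 / 2⌋

/-- Clamp the nearest integer of `c` to the interval `[a, b]`:
`a` if `⌊c⌉ ≤ a`, `b` if `⌊c⌉ ≥ b`, and `⌊c⌉` otherwise. -/
noncomputable def clampInt (a b : ℤ) (c : ℝ) : ℤ :=
  if nround c ≤ a then a
  else if b ≤ nround c then b
  else nround c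

/-- The box-constrained rounding detector computed from `d`. -/
noncomputable def roundDetector {n : ℕ} (l u : Fin n → ℤ) (d : Fin n → ℝ) : Fin n → ℤ :=
  fun i => clampInt (l i) (u i) (d i)

/-- Auxiliary recursion for the box-constrained Babai detector: `babaiAux R l u y k`
has the correct Babai values at indices `i` with `i + k ≥ n` (computed from the last
index downwards). -/
noncomputable def babaiAux {n : ℕ} (R : Matrix (Fin n) (Fin n) ℝ) (l u : Fin n → ℤ)
    (y : Fin n → ℝ) : ℕ → Fin n → ℤ
  | 0 => fun _ => 0
  | k + 1 => fun i =>
      if i.val + (k + 1) = n then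
        clampInt (l i) (u i)
          ((y i - ∑ j : Fin n, if i < j then R i j * (babaiAux R l u y k j : ℝ) else 0) / R i i)
      else babaiAux R l u y k i

/-- The box-constrained Babai detector computed from `y`, for upper triangular `R`:
for `i = n, …, 1`, `c_i = (y_i - ∑_{j>i} r_{ij} x_j^BB)/r_{ii}` and `x_i^BB` is `⌊c_i⌉`
clamped to `[l_i, u_i]`. -/
noncomputable def babaiDetector {n : ℕ} (R : Matrix (Fin n) (Fin n) ℝ) (l u : Fin n → ℤ)
    (y : Fin n → ℝ) : Fin n → ℤ :=
  babaiAux R l u y n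

/-- `phi σ ζ = (2/√(2π)) ∫_0^{ζ/(2σ)} exp(-t²/2) dt`. -/
noncomputable def phi (σ ζ : ℝ) : ℝ :=
  2 / Real.sqrt (2 * Real.pi) * ∫ t in (0:ℝ)..(ζ / (2 * σ)), Real.exp (-(t ^ 2) / 2)

open Set

/-!
Condition on `x̂ = b`. The rounding detector succeeds iff `b i + (R⁻¹ ṽ) i` clamps back to `b i`
for every `i`; the Babai detector iff `b i + ṽ i / r_ii` does, because once the recursion has
recovered `b` in the later rows, row `i` sees no interference from them. Let `N_i t` count the
`a ∈ [l_i, u_i]` with `clamp (a + t) = a`. Summed over the box, the two success probabilities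
are `∫ ∏ᵢ N_i ((R⁻¹ x) i) dν` and `∏ᵢ ∫ N_i (t / r_ii) dγ`.

`R⁻¹` is upper triangular with diagonal `1 / r_ii`, so when the first coordinate `x₀` is
integrated out only the first factor depends on it, through `x₀ / r_00 + c` with `c` fixed by
the other coordinates. No shift `c` increases `∫ N_i (a t + c) dγ`: away from `|t| = 1/2`,
`N_i t = 1 + (#[l_i, u_i] - 1) · 1{|t| < 1/2}`, and the centred interval has the largest
Gaussian mass among intervals of its length. Induction on the dimension concludes.
-/

lemma sub_half_le_nround (x : ℝ) : x - 1 / 2 ≤ nround x := by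
  unfold nround
  split_ifs
  · exact Int.le_ceil _
  · linarith [Int.sub_one_lt_floor (x + 1 / 2)]

lemma nround_le_add_half (x : ℝ) : (nround x : ℝ) ≤ x + 1 / 2 := by
  unfold nround
  split_ifs
  · linarith [Int.ceil_lt_add_one (x - 1 / 2)]
  · exact Int.floor_le _

lemma nround_intCast_add {a : ℤ} {t : ℝ} (ht : |t| < 1 / 2) : nround (a + t) = a := by
  rw [abs_lt] at ht
  have h₁ : (a : ℝ) - 1 < nround (a + t) := by linarith [sub_half_le_nround (a + t)]
  have h₂ : (nround (a + t) : ℝ) < a + 1 := by linarith [nround_le_add_half (a + t)]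
  have : a - 1 < nround (a + t) := by exact_mod_cast h₁
  have : nround (a + t) < a + 1 := by exact_mod_cast h₂
  omega

lemma nround_intCast (a : ℤ) : nround a = a := by
  simpa using nround_intCast_add (a := a) (t := 0) (by norm_num)

lemma nround_mono : Monotone nround := by
  intro x y hxy
  unfold nround
  split_ifs with hx hy hy
  · exact Int.ceil_le_ceil (by linarith)
  · linarith
  · have : ⌊x + 1 / 2⌋ < 1 := by rw [Int.floor_lt]; push_cast; linarith
    have : (-1 : ℤ) < ⌈y - 1 / 2⌉ := by rw [Int.lt_ceil]; push_cast; linarith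
    omega
  · exact Int.floor_le_floor (by linarith)

lemma measurable_nround : Measurable nround :=
  Measurable.ite measurableSet_Ici (Int.measurable_ceil.comp (measurable_id.sub_const _))
    (Int.measurable_floor.comp (measurable_id.add_const _))

section clampInt

variable {l u a : ℤ} {t : ℝ}

lemma clampInt_intCast_add (hla : l ≤ a) (hau : a ≤ u) (ht : |t| < 1 / 2) :
    clampInt l u (a + t) = a := by
  unfold clampInt
  rw [nround_intCast_add ht]
  split_ifs <;> omega

lemma clampInt_upper_add (hlu : l ≤ u) (ht : 0 ≤ t) : clampInt l u (u + t) = u := by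
  have : u ≤ nround (u + t) := by
    simpa [nround_intCast] using nround_mono (le_add_of_nonneg_right ht : (u : ℝ) ≤ u + t)
  unfold clampInt
  split_ifs <;> omega

lemma clampInt_lower_add (ht : t ≤ 0) : clampInt l u (l + t) = l := by
  have : nround (l + t) ≤ l := by
    simpa [nround_intCast] using nround_mono (add_le_of_nonpos_right ht : (l : ℝ) + t ≤ l)
  unfold clampInt
  rw [if_pos this]

lemma eq_upper_of_clampInt_add (ht : 1 / 2 < t) (h : clampInt l u (a + t) = a) : a = u := by
  have : (a : ℝ) < nround (a + t) := by linarith [sub_half_le_nround (a + t)]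
  have : a < nround (a + t) := by exact_mod_cast this
  unfold clampInt at h
  split_ifs at h <;> omega

lemma eq_lower_of_clampInt_add (ht : t < -(1 / 2)) (h : clampInt l u (a + t) = a) : a = l := by
  have : (nround (a + t) : ℝ) < a := by linarith [nround_le_add_half (a + t)]
  have : nround (a + t) < a := by exact_mod_cast this
  unfold clampInt at h
  split_ifs at h <;> omega

end clampInt

lemma measurable_clampInt (l u : ℤ) : Measurable (clampInt l u) :=
  Measurable.ite (measurable_nround measurableSet_Iic) measurable_const <|
    Measurable.ite (measurable_nround measurableSet_Ici) measurable_const measurable_nround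

lemma measurableSet_clampInt_add_eq (l u a : ℤ) :
    MeasurableSet {t : ℝ | clampInt l u (a + t) = a} :=
  (measurable_clampInt l u).comp (measurable_const_add _) (measurableSet_singleton a)

/-- One-dimensional Anderson inequality. -/
lemma intervalIntegral_shift_le {g : ℝ → ℝ} (hc : Continuous g) (heven : ∀ x, g (-x) = g x)
    (hanti : AntitoneOn g (Ici 0)) {δ : ℝ} (hδ : 0 ≤ δ) (m : ℝ) :
    ∫ x in (m - δ)..(m + δ), g x ≤ ∫ x in (-δ)..δ, g x := by
  have hint (a b : ℝ) : IntervalIntegrable g volume a b := hc.intervalIntegrable a b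
  wlog hm : 0 ≤ m generalizing m
  · have h := intervalIntegral.integral_comp_neg (f := g) (a := -m - δ) (b := -m + δ)
    simp only [heven] at h
    rw [show -(-m + δ) = m - δ by ring, show -(-m - δ) = m + δ by ring] at h
    exact h ▸ this (-m) (by linarith)
  -- Both integrals contain `∫ x in (m - δ)..δ`; what remains are `[δ, m + δ]` and its
  -- translate `[-δ, m - δ]`, which lies closer to the origin.
  have hcloser : ∫ x in δ..(m + δ), g x ≤ ∫ x in δ..(m + δ), g (x - 2 * δ) := by
    refine intervalIntegral.integral_mono_on (by linarith) (hint _ _)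
      ((hc.comp (continuous_sub_right _)).intervalIntegrable _ _) fun x ⟨hx, _⟩ => ?_
    rcases le_total 0 (x - 2 * δ) with h | h
    · exact hanti h (by simp only [mem_Ici]; linarith) (by linarith)
    · rw [← heven (x - 2 * δ)]
      exact hanti (by simp only [mem_Ici]; linarith) (by simp only [mem_Ici]; linarith)
        (by linarith)
  have htranslate : ∫ x in δ..(m + δ), g (x - 2 * δ) = ∫ x in (-δ)..(m - δ), g x := by
    rw [intervalIntegral.integral_comp_sub_right]; ring_nf
  rw [← intervalIntegral.integral_add_adjacent_intervals (hint _ δ) (hint _ _),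
    ← intervalIntegral.integral_add_adjacent_intervals (hint (-δ) (m - δ)) (hint _ δ)]
  linarith

lemma continuous_gaussianPDFReal (μ : ℝ) (v : ℝ≥0) : Continuous (gaussianPDFReal μ v) := by
  unfold gaussianPDFReal
  fun_prop

lemma gaussianPDFReal_zero_neg (v : ℝ≥0) (x : ℝ) :
    gaussianPDFReal 0 v (-x) = gaussianPDFReal 0 v x := by
  simp [gaussianPDFReal]

lemma antitoneOn_gaussianPDFReal_zero (v : ℝ≥0) : AntitoneOn (gaussianPDFReal 0 v) (Ici 0) := by
  intro x hx y _ hxy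
  simp only [gaussianPDFReal, sub_zero]
  gcongr

lemma gaussianReal_Icc_le (m : ℝ) {v : ℝ≥0} (hv : v ≠ 0) {δ : ℝ} (hδ : 0 ≤ δ) :
    gaussianReal m v (Icc (-δ) δ) ≤ gaussianReal 0 v (Icc (-δ) δ) := by
  have hshift : gaussianReal m v (Icc (-δ) δ) = gaussianReal 0 v (Icc (-m - δ) (-m + δ)) := by
    rw [← zero_add m, ← gaussianReal_map_add_const,
      Measure.map_apply (measurable_add_const m) measurableSet_Icc, preimage_add_const_Icc]
    ring_nf
  rw [hshift, gaussianReal_apply_eq_integral _ hv, gaussianReal_apply_eq_integral _ hv,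
    integral_Icc_eq_integral_Ioc, integral_Icc_eq_integral_Ioc,
    ← intervalIntegral.integral_of_le (by linarith),
    ← intervalIntegral.integral_of_le (by linarith)]
  exact ENNReal.ofReal_le_ofReal <| intervalIntegral_shift_le (continuous_gaussianPDFReal 0 v)
    (gaussianPDFReal_zero_neg v) (antitoneOn_gaussianPDFReal_zero v) hδ (-m)

lemma lintegral_comp_mul_add_gaussianReal {f : ℝ → ℝ≥0∞} (hf : Measurable f) (v : ℝ≥0)
    (a c : ℝ) :
    ∫⁻ t, f (a * t + c) ∂gaussianReal 0 v
      = ∫⁻ t, f t ∂gaussianReal c (.mk (a ^ 2) (sq_nonneg a) * v) := by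
  have hmap : (gaussianReal 0 v).map (fun t => a * t + c)
      = gaussianReal c (.mk (a ^ 2) (sq_nonneg a) * v) := by
    rw [show (fun t => a * t + c) = (· + c) ∘ (a * ·) from rfl,
      ← Measure.map_map (measurable_add_const c) (measurable_const_mul a),
      gaussianReal_map_const_mul, gaussianReal_map_add_const, mul_zero, zero_add]
  rw [← hmap, lintegral_map hf (by fun_prop)]

lemma lintegral_one_add_indicator_const {α : Type*} [MeasurableSpace α] {μ : Measure α}
    [IsProbabilityMeasure μ] {s : Set α} (hs : MeasurableSet s) (c : ℝ≥0∞) :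
    ∫⁻ x, 1 + s.indicator (fun _ => c) x ∂μ = 1 + c * μ s := by
  rw [lintegral_add_left measurable_const, lintegral_indicator_const hs, lintegral_const,
    measure_univ, one_mul]

noncomputable def clampHits (l u : ℤ) (t : ℝ) : ℕ :=
  ((Finset.Icc l u).filter fun a : ℤ => clampInt l u (a + t) = a).card

section clampHits

variable {l u : ℤ} {t : ℝ}

lemma clampHits_le_card : clampHits l u t ≤ (Finset.Icc l u).card :=
  Finset.card_filter_le _ _

lemma clampHits_of_abs_lt (ht : |t| < 1 / 2) : clampHits l u t = (Finset.Icc l u).card := by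
  refine congrArg Finset.card (Finset.filter_true_of_mem fun a ha => ?_)
  rw [Finset.mem_Icc] at ha
  exact clampInt_intCast_add ha.1 ha.2 ht

lemma one_le_clampHits (hlu : l ≤ u) : 1 ≤ clampHits l u t := by
  refine Finset.card_pos.mpr ?_
  rcases le_total 0 t with ht | ht
  · exact ⟨u, Finset.mem_filter.mpr ⟨Finset.right_mem_Icc.mpr hlu, clampInt_upper_add hlu ht⟩⟩
  · exact ⟨l, Finset.mem_filter.mpr ⟨Finset.left_mem_Icc.mpr hlu, clampInt_lower_add ht⟩⟩

lemma clampHits_le_one (ht : 1 / 2 < |t|) : clampHits l u t ≤ 1 := by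
  refine Finset.card_le_one.mpr fun a ha b hb => ?_
  have ha := (Finset.mem_filter.mp ha).2
  have hb := (Finset.mem_filter.mp hb).2
  rcases lt_abs.mp ht with ht | ht
  · rw [eq_upper_of_clampInt_add ht ha, eq_upper_of_clampInt_add ht hb]
  · have ht : t < -(1 / 2) := by linarith
    rw [eq_lower_of_clampInt_add ht ha, eq_lower_of_clampInt_add ht hb]

lemma clampHits_le_one_add_indicator (hlu : l ≤ u) :
    (clampHits l u t : ℝ≥0∞) ≤
      1 + (Icc (-(1 / 2)) (1 / 2)).indicator
        (fun _ => (((Finset.Icc l u).card - 1 : ℕ) : ℝ≥0∞)) t := by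
  by_cases ht : t ∈ Icc (-(1 / 2) : ℝ) (1 / 2)
  · rw [indicator_of_mem ht]
    have := Finset.card_pos.mpr (Finset.nonempty_Icc.mpr hlu)
    have := clampHits_le_card (l := l) (u := u) (t := t)
    exact_mod_cast (by omega : clampHits l u t ≤ 1 + ((Finset.Icc l u).card - 1))
  · rw [indicator_of_notMem ht, add_zero]
    exact_mod_cast clampHits_le_one (lt_of_not_ge fun h => ht (abs_le.mp h))

lemma one_add_indicator_le_clampHits (hlu : l ≤ u) :
    1 + (Ioo (-(1 / 2)) (1 / 2)).indicator
        (fun _ => (((Finset.Icc l u).card - 1 : ℕ) : ℝ≥0∞)) t ≤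
      clampHits l u t := by
  by_cases ht : t ∈ Ioo (-(1 / 2) : ℝ) (1 / 2)
  · rw [indicator_of_mem ht, clampHits_of_abs_lt (abs_lt.mpr ht)]
    have := Finset.card_pos.mpr (Finset.nonempty_Icc.mpr hlu)
    exact_mod_cast (by omega : 1 + ((Finset.Icc l u).card - 1) ≤ (Finset.Icc l u).card)
  · rw [indicator_of_notMem ht, add_zero]
    exact_mod_cast one_le_clampHits hlu

end clampHits

lemma clampHits_eq_sum_indicator (l u : ℤ) (t : ℝ) :
    (clampHits l u t : ℝ≥0∞)
      = ∑ a ∈ Finset.Icc l u, {t : ℝ | clampInt l u (a + t) = a}.indicator 1 t := by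
  simp only [clampHits, indicator_apply, mem_ofPred_eq, Pi.one_apply, Finset.sum_boole]

lemma measurable_clampHits (l u : ℤ) : Measurable fun t => (clampHits l u t : ℝ≥0∞) := by
  simp_rw [clampHits_eq_sum_indicator]
  exact Finset.measurable_sum _ fun a _ =>
    measurable_one.indicator (measurableSet_clampInt_add_eq l u a)

lemma lintegral_clampHits_comp (l u : ℤ) (μ : Measure ℝ) {f : ℝ → ℝ} (hf : Measurable f) :
    ∫⁻ t, (clampHits l u (f t) : ℝ≥0∞) ∂μ
      = ∑ a ∈ Finset.Icc l u, μ {t | clampInt l u (a + f t) = a} := by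
  simp_rw [clampHits_eq_sum_indicator]
  rw [lintegral_finsetSum _ fun a _ => by
    exact (measurable_one.indicator (measurableSet_clampInt_add_eq l u a)).comp hf]
  exact Finset.sum_congr rfl fun a _ =>
    lintegral_indicator_one ((measurableSet_clampInt_add_eq l u a).preimage hf)

lemma lintegral_clampHits_gaussianReal_le {l u : ℤ} (hlu : l ≤ u) (m : ℝ) {v : ℝ≥0}
    (hv : v ≠ 0) :
    ∫⁻ t, (clampHits l u t : ℝ≥0∞) ∂gaussianReal m v
      ≤ ∫⁻ t, (clampHits l u t : ℝ≥0∞) ∂gaussianReal 0 v := by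
  set K : ℝ≥0∞ := (((Finset.Icc l u).card - 1 : ℕ) : ℝ≥0∞)
  have : NullSingletonClass (gaussianReal 0 v) := nullSingletonClass_gaussianReal hv
  calc ∫⁻ t, (clampHits l u t : ℝ≥0∞) ∂gaussianReal m v
      ≤ ∫⁻ t, 1 + (Icc (-(1 / 2)) (1 / 2)).indicator (fun _ => K) t ∂gaussianReal m v :=
        lintegral_mono fun _ => clampHits_le_one_add_indicator hlu
    _ = 1 + K * gaussianReal m v (Icc (-(1 / 2)) (1 / 2)) :=
        lintegral_one_add_indicator_const measurableSet_Icc K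
    _ ≤ 1 + K * gaussianReal 0 v (Icc (-(1 / 2)) (1 / 2)) := by
        gcongr 1 + K * ?_
        exact gaussianReal_Icc_le m hv (by norm_num : (0 : ℝ) ≤ 1 / 2)
    _ = 1 + K * gaussianReal 0 v (Ioo (-(1 / 2)) (1 / 2)) := by
        rw [measure_congr Ioo_ae_eq_Icc]
    _ = ∫⁻ t, 1 + (Ioo (-(1 / 2)) (1 / 2)).indicator (fun _ => K) t ∂gaussianReal 0 v :=
        (lintegral_one_add_indicator_const measurableSet_Ioo K).symm
    _ ≤ ∫⁻ t, (clampHits l u t : ℝ≥0∞) ∂gaussianReal 0 v :=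
        lintegral_mono fun _ => one_add_indicator_le_clampHits hlu

lemma lintegral_clampHits_mul_add_le {l u : ℤ} (hlu : l ≤ u) {v : ℝ≥0} (hv : v ≠ 0) {a : ℝ}
    (ha : a ≠ 0) (c : ℝ) :
    ∫⁻ t, (clampHits l u (a * t + c) : ℝ≥0∞) ∂gaussianReal 0 v
      ≤ ∫⁻ t, (clampHits l u (a * t) : ℝ≥0∞) ∂gaussianReal 0 v := by
  have hv' : (.mk (a ^ 2) (sq_nonneg a) * v : ℝ≥0) ≠ 0 :=
    mul_ne_zero (fun h => ha (pow_eq_zero_iff two_ne_zero |>.mp (congrArg Subtype.val h))) hv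
  have h₀ := lintegral_comp_mul_add_gaussianReal (measurable_clampHits l u) v a 0
  simp only [add_zero] at h₀
  rw [lintegral_comp_mul_add_gaussianReal (measurable_clampHits l u), h₀]
  exact lintegral_clampHits_gaussianReal_le hlu c hv'

namespace Matrix.IsUpperTriangular

lemma mulVec_apply {m α : Type*} [Fintype m] [LinearOrder m] [NonUnitalNonAssocSemiring α]
    {R : Matrix m m α} (hR : R.IsUpperTriangular) (x : m → α) (i : m) :
    (R *ᵥ x) i = R i i * x i + ∑ j, if i < j then R i j * x j else 0 := by
  have hsplit (j : m) : R i j * x j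
      = (if i = j then R i i * x i else 0) + (if i < j then R i j * x j else 0) := by
    rcases lt_trichotomy j i with h | rfl | h
    · simp [hR h, h.ne', not_lt_of_gt h]
    · simp
    · simp [h, h.ne]
  simp only [mulVec, dotProduct]
  rw [Finset.sum_congr rfl fun j _ => hsplit j]
  simp [Finset.sum_add_distrib]

variable {m K : Type*} [Fintype m] [DecidableEq m] [LinearOrder m] [Field K]
  {R : Matrix m m K}

lemma isUnit_det (hR : R.IsUpperTriangular) (hdiag : ∀ i, R i i ≠ 0) : IsUnit R.det := by
  rw [det_of_isUpperTriangular hR]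
  exact isUnit_iff_ne_zero.mpr (Finset.prod_ne_zero_iff.mpr fun i _ => hdiag i)

lemma inv (hR : R.IsUpperTriangular) (hdiag : ∀ i, R i i ≠ 0) : R⁻¹.IsUpperTriangular :=
  have := R.invertibleOfIsUnitDet (hR.isUnit_det hdiag)
  blockTriangular_inv_of_blockTriangular hR

lemma inv_apply_self (hR : R.IsUpperTriangular) (hdiag : ∀ i, R i i ≠ 0) (i : m) :
    R⁻¹ i i = (R i i)⁻¹ := by
  have h : (R⁻¹ * R) i i = 1 := by
    rw [nonsing_inv_mul R (hR.isUnit_det hdiag), one_apply_eq]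
  rw [mul_apply, Finset.sum_eq_single i] at h
  · exact eq_inv_of_mul_eq_one_left h
  · intro j _ hji
    rcases lt_or_gt_of_ne hji with hj | hj
    · rw [hR.inv hdiag hj, zero_mul]
    · rw [hR hj, mul_zero]
  · simp

end Matrix.IsUpperTriangular

lemma lintegral_pi_fin_succ {α : Type*} [MeasurableSpace α] {N : ℕ} (μ : Measure α)
    [SigmaFinite μ] {f : (Fin (N + 1) → α) → ℝ≥0∞} (hf : Measurable f) :
    ∫⁻ x, f x ∂Measure.pi (fun _ => μ)
      = ∫⁻ w, ∫⁻ t, f (Fin.cons t w) ∂μ ∂Measure.pi (fun _ => μ) := by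
  set e := MeasurableEquiv.piFinSuccAbove (fun _ : Fin (N + 1) => α) 0
  have hcons : f ∘ e.symm = fun p => f (Fin.cons p.1 p.2) := by
    funext p
    simp only [Function.comp_apply, e, MeasurableEquiv.piFinSuccAbove_symm_apply,
      Fin.insertNthEquiv, Equiv.coe_fn_mk, Fin.insertNth_zero]
    rfl
  have hfc : Measurable fun p : α × (Fin N → α) => f (Fin.cons p.1 p.2) :=
    hcons ▸ hf.comp e.symm.measurable
  rw [← ((measurePreserving_piFinSuccAbove (fun _ => μ) 0).symm e).lintegral_comp hf,
    show (fun p => f (e.symm p)) = _ from hcons, lintegral_prod _ hfc.aemeasurable,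
    lintegral_lintegral_swap hfc.aemeasurable]

lemma mulVec_cons_apply {α : Type*} [NonUnitalNonAssocSemiring α] {N : ℕ}
    (A : Matrix (Fin (N + 1)) (Fin (N + 1)) α) (t : α) (w : Fin N → α) (i : Fin (N + 1)) :
    (A *ᵥ Fin.cons t w) i = A i 0 * t + (A.submatrix id Fin.succ *ᵥ w) i := by
  simp [mulVec, dotProduct, Fin.sum_univ_succ]

lemma measurable_mulVec {m : Type*} [Fintype m] (A : Matrix m m ℝ) :
    Measurable fun x : m → ℝ => A *ᵥ x :=
  (continuous_const.matrix_mulVec continuous_id).measurable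

theorem lintegral_prod_mulVec_le {N : ℕ} (μ : Measure ℝ) [SigmaFinite μ]
    (A : Matrix (Fin N) (Fin N) ℝ) (hA : A.IsUpperTriangular) (g : Fin N → ℝ → ℝ≥0∞)
    (hg : ∀ i, Measurable (g i))
    (hshift : ∀ i c, ∫⁻ t, g i (A i i * t + c) ∂μ ≤ ∫⁻ t, g i (A i i * t) ∂μ) :
    ∫⁻ x, ∏ i, g i ((A *ᵥ x) i) ∂Measure.pi (fun _ => μ) ≤ ∏ i, ∫⁻ t, g i (A i i * t) ∂μ := by
  induction N with
  | zero => simp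
  | succ N ih =>
    set A' := A.submatrix Fin.succ Fin.succ
    have hrow (k : Fin N) (t : ℝ) (w : Fin N → ℝ) :
        (A *ᵥ Fin.cons t w) k.succ = (A' *ᵥ w) k := by
      rw [mulVec_cons_apply, hA (i := k.succ) (j := 0) (Fin.succ_pos k), zero_mul, zero_add]
      rfl
    have hmeas : Measurable fun x => ∏ i, g i ((A *ᵥ x) i) :=
      Finset.measurable_prod _ fun i _ =>
        (hg i).comp ((measurable_pi_apply i).comp (measurable_mulVec A))
    have hrest : Measurable fun w => ∏ k, g k.succ ((A' *ᵥ w) k) :=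
      Finset.measurable_prod _ fun k _ =>
        (hg k.succ).comp ((measurable_pi_apply k).comp (measurable_mulVec A'))
    calc ∫⁻ x, ∏ i, g i ((A *ᵥ x) i) ∂Measure.pi (fun _ => μ)
        = ∫⁻ w, (∫⁻ t, g 0 (A 0 0 * t + (A.submatrix id Fin.succ *ᵥ w) 0) ∂μ)
            * ∏ k, g k.succ ((A' *ᵥ w) k) ∂Measure.pi (fun _ => μ) := by
          rw [lintegral_pi_fin_succ μ hmeas]
          refine lintegral_congr fun w => ?_
          simp only [Fin.prod_univ_succ, hrow]
          simp only [mulVec_cons_apply]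
          exact lintegral_mul_const _ ((hg 0).comp (by fun_prop))
      _ ≤ ∫⁻ w, (∫⁻ t, g 0 (A 0 0 * t) ∂μ)
            * ∏ k, g k.succ ((A' *ᵥ w) k) ∂Measure.pi (fun _ => μ) :=
          lintegral_mono fun w => by gcongr ?_ * _; exact hshift 0 _
      _ = (∫⁻ t, g 0 (A 0 0 * t) ∂μ)
            * ∫⁻ w, ∏ k, g k.succ ((A' *ᵥ w) k) ∂Measure.pi (fun _ => μ) :=
          lintegral_const_mul _ hrest
      _ ≤ (∫⁻ t, g 0 (A 0 0 * t) ∂μ) * ∏ k : Fin N, ∫⁻ t, g k.succ (A' k k * t) ∂μ := by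
          gcongr
          exact ih A' (fun i j hij => hA (Fin.succ_lt_succ_iff.mpr hij)) _
            (fun k => hg k.succ) fun k => hshift k.succ
      _ = ∏ i, ∫⁻ t, g i (A i i * t) ∂μ :=
          (Fin.prod_univ_succ fun i => ∫⁻ t, g i (A i i * t) ∂μ).symm

section Babai

variable {n : ℕ} (R : Matrix (Fin n) (Fin n) ℝ) (l u : Fin n → ℤ) (y : Fin n → ℝ)

lemma babaiAux_of_le {i : Fin n} {k : ℕ} (hk : n ≤ i + k) :
    babaiAux R l u y k i = babaiAux R l u y (n - i) i := by
  induction k with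
  | zero => omega
  | succ k ih =>
    by_cases h : i.val + (k + 1) = n
    · rw [show n - i = k + 1 by omega]
    · simp only [babaiAux, if_neg h]
      exact ih (by omega)

lemma babaiDetector_apply (i : Fin n) :
    babaiDetector R l u y i = clampInt (l i) (u i)
      ((y i - ∑ j, if i < j then R i j * (babaiDetector R l u y j : ℝ) else 0) / R i i) := by
  have hi := i.isLt
  rw [babaiDetector, babaiAux_of_le R l u y (by omega : n ≤ i + n),
    show n - i = (n - i - 1) + 1 by omega]
  simp only [babaiAux, if_pos (show i.val + (n - i - 1 + 1) = n by omega)]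
  congr 4 with j
  split_ifs with hij
  · rw [babaiAux_of_le R l u y (by omega : n ≤ j + (n - i - 1)),
      babaiAux_of_le R l u y (by omega : n ≤ j + n)]
  · rfl

variable {R l u}

lemma babaiDetector_mulVec_add_eq_iff (hR : R.IsUpperTriangular) (hdiag : ∀ i, R i i ≠ 0)
    (b : Fin n → ℤ) (w : Fin n → ℝ) :
    babaiDetector R l u (fun i => (R *ᵥ fun j => (b j : ℝ)) i + w i) = b ↔
      ∀ i, clampInt (l i) (u i) (b i + w i / R i i) = b i := by
  set y : Fin n → ℝ := fun i => (R *ᵥ fun j => (b j : ℝ)) i + w i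
  have hrow (i : Fin n) (hb : ∀ j, i < j → babaiDetector R l u y j = b j) :
      babaiDetector R l u y i = clampInt (l i) (u i) (b i + w i / R i i) := by
    rw [babaiDetector_apply]
    congr 1
    have : ∑ j, (if i < j then R i j * (babaiDetector R l u y j : ℝ) else 0)
        = ∑ j, if i < j then R i j * (b j : ℝ) else 0 :=
      Finset.sum_congr rfl fun j _ => by split_ifs with h; exacts [by rw [hb j h], rfl]
    rw [this]
    simp only [y, hR.mulVec_apply]
    field_simp [hdiag i]
    ring
  constructor
  · intro h i
    rw [← hrow i fun j _ => congrFun h j, h]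
  · intro h
    funext i
    induction i using WellFoundedGT.induction with
    | _ i ih => rw [hrow i ih, h i]

end Babai

lemma measurableSet_forall_mem {ι E : Type*} [Countable ι] [MeasurableSpace E]
    {f : E → ι → ℝ} (hf : Measurable f) {H : ι → Set ℝ} (hH : ∀ i, MeasurableSet (H i)) :
    MeasurableSet {x | ∀ i, f x i ∈ H i} := by
  simp only [ofPred_forall]
  exact MeasurableSet.iInter fun i => (measurable_pi_apply i).comp hf (hH i)

lemma sum_measure_forall_mem_eq_lintegral {ι α E : Type*} [Fintype ι] [DecidableEq ι]
    [MeasurableSpace E] (ν : Measure E) {f : E → ι → ℝ} (hf : Measurable f) (S : ι → Finset α)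
    {H : ι → α → Set ℝ} (hH : ∀ i a, MeasurableSet (H i a)) :
    ∑ b ∈ Fintype.piFinset S, ν {x | ∀ i, f x i ∈ H i (b i)}
      = ∫⁻ x, ∏ i, ∑ a ∈ S i, (H i a).indicator 1 (f x i) ∂ν := by
  have hind (b : ι → α) (x : E) : {x | ∀ i, f x i ∈ H i (b i)}.indicator 1 x
      = ∏ i, (H i (b i)).indicator (1 : ℝ → ℝ≥0∞) (f x i) := by
    by_cases h : x ∈ {x | ∀ i, f x i ∈ H i (b i)}
    · rw [indicator_of_mem h, Finset.prod_eq_one fun i _ => indicator_of_mem (h i) _]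
      rfl
    · obtain ⟨i, hi⟩ := not_forall.mp h
      rw [indicator_of_notMem h,
        Finset.prod_eq_zero (Finset.mem_univ i) (indicator_of_notMem hi _)]
  have hmeas (b : ι → α) := measurableSet_forall_mem hf fun i => hH i (b i)
  simp_rw [Finset.prod_univ_sum, ← hind]
  rw [lintegral_finsetSum _ fun b _ => measurable_one.indicator (hmeas b)]
  exact Finset.sum_congr rfl fun b _ => (lintegral_indicator_one (hmeas b)).symm

lemma sum_measure_pi_clampInt_eq_prod_lintegral {n : ℕ} (μ : Measure ℝ) [SigmaFinite μ]
    (l u : Fin n → ℤ) (d : Fin n → ℝ) :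
    ∑ b ∈ Fintype.piFinset fun i => Finset.Icc (l i) (u i),
        Measure.pi (fun _ => μ) {x | ∀ i, clampInt (l i) (u i) (b i + d i * x i) = b i}
      = ∏ i, ∫⁻ t, (clampHits (l i) (u i) (d i * t) : ℝ≥0∞) ∂μ := by
  have hpi (b : Fin n → ℤ) : {x : Fin n → ℝ | ∀ i, clampInt (l i) (u i) (b i + d i * x i) = b i}
      = univ.pi fun i => {t | clampInt (l i) (u i) (b i + d i * t) = b i} := by
    ext x
    simp
  simp_rw [hpi, Measure.pi_pi, lintegral_clampHits_comp _ _ μ (measurable_const_mul _)]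
  exact (Finset.prod_univ_sum (fun i => Finset.Icc (l i) (u i))
    fun i a => μ {t | clampInt (l i) (u i) (a + d i * t) = a}).symm

lemma sum_measure_clampInt_mulVec_le_diag {n : ℕ} {V : ℝ≥0} (hV : V ≠ 0)
    {A : Matrix (Fin n) (Fin n) ℝ} (hA : A.IsUpperTriangular) (hdiag : ∀ i, A i i ≠ 0)
    {l u : Fin n → ℤ} (hlu : ∀ i, l i ≤ u i) :
    ∑ b ∈ Fintype.piFinset fun i => Finset.Icc (l i) (u i),
        Measure.pi (fun _ => gaussianReal 0 V)
          {x | ∀ i, clampInt (l i) (u i) (b i + (A *ᵥ x) i) = b i}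
      ≤ ∑ b ∈ Fintype.piFinset fun i => Finset.Icc (l i) (u i),
        Measure.pi (fun _ => gaussianReal 0 V)
          {x | ∀ i, clampInt (l i) (u i) (b i + A i i * x i) = b i} := by
  have hcount := sum_measure_forall_mem_eq_lintegral (Measure.pi fun _ => gaussianReal 0 V)
    (measurable_mulVec A) (fun i => Finset.Icc (l i) (u i))
    fun i a => measurableSet_clampInt_add_eq (l i) (u i) a
  simp_rw [← clampHits_eq_sum_indicator] at hcount
  rw [sum_measure_pi_clampInt_eq_prod_lintegral]
  exact hcount.trans_le <| lintegral_prod_mulVec_le _ A hA _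
    (fun i => measurable_clampHits (l i) (u i))
    fun i => lintegral_clampHits_mul_add_le (hlu i) hV (hdiag i)

lemma measure_setOf_mem_eq_of_uniform_indepFun {Ω α E : Type*} [MeasurableSpace Ω]
    [MeasurableSpace α] [MeasurableSingletonClass α] [MeasurableSpace E] {P : Measure Ω}
    {X : Ω → α} {Y : Ω → E} (hX : Measurable X) (hY : Measurable Y) (hXY : IndepFun X Y P)
    {B : Finset α} (hB : ∀ ω, X ω ∈ B) (hunif : ∀ b ∈ B, P {ω | X ω = b} = (B.card : ℝ≥0∞)⁻¹)
    {S : α → Set E} (hS : ∀ b, MeasurableSet (S b)) :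
    P {ω | Y ω ∈ S (X ω)} = (B.card : ℝ≥0∞)⁻¹ * ∑ b ∈ B, P.map Y (S b) := by
  have hunion : {ω | Y ω ∈ S (X ω)} = ⋃ b ∈ B, X ⁻¹' {b} ∩ Y ⁻¹' S b := by
    ext ω
    simp only [mem_ofPred_eq, mem_iUnion, mem_inter_iff, mem_preimage, mem_singleton_iff,
      exists_prop]
    exact ⟨fun h => ⟨X ω, hB ω, rfl, h⟩, by rintro ⟨b, -, rfl, h⟩; exact h⟩
  have hdisj : (B : Set α).PairwiseDisjoint fun b => X ⁻¹' {b} ∩ Y ⁻¹' S b :=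
    fun b _ b' _ hbb' => disjoint_left.mpr fun ω h h' => hbb' (h.1.symm.trans h'.1)
  rw [hunion, measure_biUnion_finset hdisj
    fun b _ => (hX (measurableSet_singleton b)).inter (hY (hS b)), Finset.mul_sum]
  refine Finset.sum_congr rfl fun b hb => ?_
  rw [hXY.measure_inter_preimage_eq_mul _ _ (measurableSet_singleton b) (hS b),
    Measure.map_apply hY (hS b), ← hunif b hb]
  rfl

theorem success_prob_rounding_le_babai_uniform_general
    {n : ℕ}
    (R : Matrix (Fin n) (Fin n) ℝ)
    (hupper : ∀ i j : Fin n, j < i → R i j = 0)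
    (hdiag : ∀ i : Fin n, 0 < R i i)
    (σ : ℝ) (hσ : 0 < σ)
    (l u : Fin n → ℤ) (hlu : ∀ i, l i < u i)
    {Ω : Type} [MeasurableSpace Ω] (P : Measure Ω)
    (v : Ω → Fin n → ℝ) (hmv : Measurable v)
    (hv : Measure.map v P = Measure.pi fun _ : Fin n => gaussianReal 0 ⟨σ ^ 2, sq_nonneg σ⟩)
    (B : Finset (Fin n → ℤ)) (hB : B = Fintype.piFinset fun i => Finset.Icc (l i) (u i))
    (xhat : Ω → Fin n → ℤ) (hmx : Measurable xhat)
    (hmem : ∀ ω, xhat ω ∈ B)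
    (hunif : ∀ b ∈ B, P {ω | xhat ω = b} = (B.card : ℝ≥0∞)⁻¹)
    (hindep : IndepFun xhat v P) :
    P {ω | roundDetector l u (fun i => (xhat ω i : ℝ) + (R⁻¹ *ᵥ v ω) i) = xhat ω}
      ≤ P {ω | babaiDetector R l u (fun i => (R *ᵥ (fun j => (xhat ω j : ℝ))) i + v ω i) = xhat ω} := by
  have hR : R.IsUpperTriangular := fun i j => hupper i j
  have hdiag' (i : Fin n) : R i i ≠ 0 := (hdiag i).ne'
  have hvar : (⟨σ ^ 2, sq_nonneg σ⟩ : ℝ≥0) ≠ 0 :=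
    fun h => hσ.ne' (pow_eq_zero_iff two_ne_zero |>.mp (congrArg Subtype.val h))
  simp only [funext_iff, roundDetector, babaiDetector_mulVec_add_eq_iff hR hdiag',
    div_eq_inv_mul, ← hR.inv_apply_self hdiag']
  calc _ = (B.card : ℝ≥0∞)⁻¹ * ∑ b ∈ B, P.map v
          {x | ∀ i, clampInt (l i) (u i) (b i + (R⁻¹ *ᵥ x) i) = b i} :=
        measure_setOf_mem_eq_of_uniform_indepFun hmx hmv hindep hmem hunif fun b =>
          measurableSet_forall_mem (measurable_mulVec R⁻¹)
            fun i => measurableSet_clampInt_add_eq (l i) (u i) (b i)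
    _ ≤ (B.card : ℝ≥0∞)⁻¹ * ∑ b ∈ B, P.map v
          {x | ∀ i, clampInt (l i) (u i) (b i + R⁻¹ i i * x i) = b i} := by
        rw [hv, hB]
        gcongr _ * ?_
        exact sum_measure_clampInt_mulVec_le_diag hvar (hR.inv hdiag')
          (by simp [hR.inv_apply_self hdiag', hdiag']) fun i => (hlu i).le
    _ = _ := (measure_setOf_mem_eq_of_uniform_indepFun hmx hmv hindep hmem hunif fun b =>
          measurableSet_forall_mem (measurable_pi_lambda _ fun i =>
            (measurable_pi_apply i).const_mul _)
            fun i => measurableSet_clampInt_add_eq (l i) (u i) (b i)).symm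

/-- Theorem 5 of the paper: for a parameter uniformly distributed over the box, the success
probability of the box-constrained rounding detector is at most that of the
box-constrained Babai detector. -/
theorem success_prob_rounding_le_babai_uniform
    {n : ℕ} (hn : 1 ≤ n)
    (R : Matrix (Fin n) (Fin n) ℝ)
    (hupper : ∀ i j : Fin n, j < i → R i j = 0)
    (hdiag : ∀ i : Fin n, 0 < R i i)
    (σ : ℝ) (hσ : 0 < σ)
    (l u : Fin n → ℤ) (hlu : ∀ i, l i < u i)
    {Ω : Type} [MeasurableSpace Ω] (P : Measure Ω) [IsProbabilityMeasure P]
    (v : Ω → Fin n → ℝ) (hmv : Measurable v)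
    (hv : Measure.map v P = Measure.pi fun _ : Fin n => gaussianReal 0 ⟨σ ^ 2, sq_nonneg σ⟩)
    (B : Finset (Fin n → ℤ)) (hB : B = Fintype.piFinset fun i => Finset.Icc (l i) (u i))
    (xhat : Ω → Fin n → ℤ) (hmx : Measurable xhat)
    (hmem : ∀ ω, xhat ω ∈ B)
    (hunif : ∀ b ∈ B, P {ω | xhat ω = b} = (B.card : ℝ≥0∞)⁻¹)
    (hindep : IndepFun xhat v P) :
    P {ω | roundDetector l u (fun i => (xhat ω i : ℝ) + (R⁻¹ *ᵥ v ω) i) = xhat ω}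
      ≤ P {ω | babaiDetector R l u (fun i => (R *ᵥ (fun j => (xhat ω j : ℝ))) i + v ω i) = xhat ω} :=
  success_prob_rounding_le_babai_uniform_general R hupper hdiag σ hσ l u hlu P v hmv hv B hB xhat
    hmx hmem hunif hindep
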